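/- arXiv:1606.04809 — 2 statements merged into one kernel-verified Lean document; each statement's English description precedes it below -/
import Mathlib

section
/- Let X, Y be square-integrable random vectors in ℝ^d and let S ⊆ {1,...,d} be a random support set independent of X with P(v ∈ S) contributing maximum right-degree Δ ∈ (0,1], meaning E‖x‖_S² ≤ Δ‖x‖² for all fixed x, where ‖x‖_S² := ∑_{v∈S} x_v². If Y is supported on S (i.e., Y_v = 0 for v ∉ S), then E|⟨X, Y⟩| ≤ (√Δ/2)(E‖X‖² + E‖Y‖²). -/
open MeasureTheory ProbabilityTheory

noncomputable instance finsetMeasurableSpace (d : ℕ) : MeasurableSpace (Finset (Fin d)) := ⊤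

theorem stmt1 {d : ℕ} {Ω : Type*} [MeasurableSpace Ω] (μ : Measure Ω) [IsProbabilityMeasure μ]
    (X Y : Ω → Fin d → ℝ) (S : Ω → Finset (Fin d)) (Δ : ℝ) (hΔ0 : 0 < Δ) (hΔ1 : Δ ≤ 1)
    (hmX : Measurable X) (hmY : Measurable Y) (hmS : Measurable S)
    (hX2 : Integrable (fun ω => ∑ v, (X ω v) ^ 2) μ)
    (hY2 : Integrable (fun ω => ∑ v, (Y ω v) ^ 2) μ)
    (hindep : IndepFun X S μ)
    (hsparse : ∀ x : Fin d → ℝ,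
      ∫ ω, (∑ v ∈ S ω, (x v) ^ 2) ∂μ ≤ Δ * ∑ v, (x v) ^ 2)
    (hsupp : ∀ ω, ∀ v, v ∉ S ω → Y ω v = 0) :
    ∫ ω, |∑ v, X ω v * Y ω v| ∂μ ≤
      Real.sqrt Δ / 2 * ((∫ ω, ∑ v, (X ω v) ^ 2 ∂μ) + ∫ ω, ∑ v, (Y ω v) ^ 2 ∂μ) := by
  set sΔ := Real.sqrt Δ with hsΔdef
  have hsΔ : 0 < sΔ := Real.sqrt_pos.mpr hΔ0
  have hsΔsq : sΔ ^ 2 = Δ := Real.sq_sqrt hΔ0.le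
  have hmXv : ∀ v, Measurable fun ω => X ω v := fun v => (measurable_pi_apply v).comp hmX
  set A : Ω → ℝ := fun ω => ∑ v ∈ S ω, (X ω v) ^ 2 with hAdef
  have hmSv : ∀ v : Fin d, MeasurableSet {ω | v ∈ S ω} := fun v =>
    hmS (MeasurableSpace.measurableSet_top (s := {s | v ∈ s}))
  have hAeq : ∀ ω, A ω = ∑ v, (if v ∈ S ω then (X ω v) ^ 2 else 0) := by
    intro ω
    rw [hAdef]
    rw [Finset.sum_ite_mem, Finset.univ_inter]
  have hmA : Measurable A := by
    rw [funext hAeq]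
    exact Finset.measurable_sum _ fun v _ =>
      Measurable.ite (hmSv v) ((hmXv v).pow_const 2) measurable_const
  have hA_nonneg : ∀ ω, 0 ≤ A ω := fun ω => Finset.sum_nonneg fun v _ => sq_nonneg _
  have hA_le : ∀ ω, A ω ≤ ∑ v, (X ω v) ^ 2 := fun ω =>
    Finset.sum_le_sum_of_subset_of_nonneg (Finset.subset_univ _) fun v _ _ => sq_nonneg _
  have hA_int : Integrable A μ := by
    refine hX2.mono' hmA.aestronglyMeasurable (Filter.Eventually.of_forall fun ω => ?_)
    rw [Real.norm_eq_abs, abs_of_nonneg (hA_nonneg ω)]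
    exact hA_le ω
  have hX2v : ∀ v, Integrable (fun ω => (X ω v) ^ 2) μ := by
    intro v
    refine hX2.mono' ((hmXv v).pow_const 2).aestronglyMeasurable
      (Filter.Eventually.of_forall fun ω => ?_)
    rw [Real.norm_eq_abs, abs_of_nonneg (sq_nonneg _)]
    exact Finset.single_le_sum (f := fun v => (X ω v) ^ 2) (fun v _ => sq_nonneg _)
      (Finset.mem_univ v)
  -- sparsity: the probability each coordinate is in S is at most Δ
  have hp_le : ∀ v : Fin d, (∫ ω, (if v ∈ S ω then (1:ℝ) else 0) ∂μ) ≤ Δ := by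
    intro v
    have h2 : (∑ w : Fin d, (if w = v then (1:ℝ) else 0) ^ 2) = 1 := by
      simp [apply_ite (· ^ 2)]
    calc (∫ ω, (if v ∈ S ω then (1:ℝ) else 0) ∂μ)
        = ∫ ω, ∑ w ∈ S ω, (if w = v then (1:ℝ) else 0) ^ 2 ∂μ := by
          congr 1; funext ω
          simp [apply_ite (· ^ 2), Finset.sum_ite_eq']
      _ ≤ Δ * ∑ w : Fin d, (if w = v then (1:ℝ) else 0) ^ 2 :=
          hsparse (fun w => if w = v then 1 else 0)
      _ = Δ := by rw [h2, mul_one]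
  have hInd_meas : ∀ v : Fin d, Measurable (fun ω => (if v ∈ S ω then (1:ℝ) else 0)) :=
    fun v => Measurable.ite (hmSv v) measurable_const measurable_const
  have hInd_int : ∀ v : Fin d, Integrable (fun ω => (if v ∈ S ω then (1:ℝ) else 0)) μ := by
    intro v
    refine (integrable_const (1:ℝ)).mono' (hInd_meas v).aestronglyMeasurable
      (Filter.Eventually.of_forall fun ω => ?_)
    by_cases h : v ∈ S ω <;> simp [h]
  have hindep_v : ∀ v : Fin d,
      IndepFun (fun ω => (if v ∈ S ω then (1:ℝ) else 0)) (fun ω => (X ω v) ^ 2) μ := by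
    intro v
    exact (hindep.symm).comp
      (φ := fun s : Finset (Fin d) => if v ∈ s then (1:ℝ) else 0)
      (ψ := fun x : Fin d → ℝ => (x v) ^ 2)
      measurable_from_top ((measurable_pi_apply v).pow_const 2)
  have hprod_int : ∀ v : Fin d,
      Integrable (fun ω => (if v ∈ S ω then (1:ℝ) else 0) * (X ω v) ^ 2) μ := by
    intro v
    exact (hX2v v).bdd_mul (hInd_meas v).aestronglyMeasurable
      (c := 1) (Filter.Eventually.of_forall fun ω => by by_cases h : v ∈ S ω <;> simp [h])
  have hIA : ∫ ω, A ω ∂μ ≤ Δ * ∫ ω, ∑ v, (X ω v) ^ 2 ∂μ := by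
    have h1 : ∫ ω, A ω ∂μ =
        ∑ v, ∫ ω, (if v ∈ S ω then (1:ℝ) else 0) * (X ω v) ^ 2 ∂μ := by
      rw [← integral_finset_sum _ fun v _ => hprod_int v]
      congr 1; funext ω
      rw [hAeq ω]
      congr 1; funext v
      by_cases h : v ∈ S ω <;> simp [h]
    have h3 : ∫ ω, ∑ v, (X ω v) ^ 2 ∂μ = ∑ v, ∫ ω, (X ω v) ^ 2 ∂μ :=
      integral_finset_sum _ fun v _ => hX2v v
    rw [h1, h3, Finset.mul_sum]
    refine Finset.sum_le_sum fun v _ => ?_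
    have h2 : ∫ ω, (if v ∈ S ω then (1:ℝ) else 0) * (X ω v) ^ 2 ∂μ =
        (∫ ω, (if v ∈ S ω then (1:ℝ) else 0) ∂μ) * ∫ ω, (X ω v) ^ 2 ∂μ :=
      (hindep_v v).integral_mul_eq_mul_integral (hInd_int v).aestronglyMeasurable (hX2v v).aestronglyMeasurable
    rw [h2]
    exact mul_le_mul_of_nonneg_right (hp_le v) (integral_nonneg fun ω => sq_nonneg _)
  -- pointwise bound
  have hpt : ∀ ω, |∑ v, X ω v * Y ω v| ≤
      1 / (2 * sΔ) * A ω + sΔ / 2 * ∑ v, (Y ω v) ^ 2 := by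
    intro ω
    have hsum : (∑ v, X ω v * Y ω v) = ∑ v ∈ S ω, X ω v * Y ω v := by
      refine (Finset.sum_subset (Finset.subset_univ _) fun v _ hv => ?_).symm
      rw [hsupp ω v hv, mul_zero]
    set B := ∑ v, (Y ω v) ^ 2 with hBdef
    have hB_nonneg : 0 ≤ B := Finset.sum_nonneg fun v _ => sq_nonneg _
    have hB' : (∑ v ∈ S ω, (Y ω v) ^ 2) ≤ B :=
      Finset.sum_le_sum_of_subset_of_nonneg (Finset.subset_univ _) fun v _ _ => sq_nonneg _
    have hsq : (∑ v, X ω v * Y ω v) ^ 2 ≤ A ω * B := by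
      rw [hsum]
      exact (Finset.sum_mul_sq_le_sq_mul_sq _ _ _).trans
        (mul_le_mul_of_nonneg_left hB' (hA_nonneg ω))
    have habs : |∑ v, X ω v * Y ω v| ≤ Real.sqrt (A ω * B) := by
      rw [← Real.sqrt_sq_eq_abs]
      exact Real.sqrt_le_sqrt hsq
    refine habs.trans ?_
    have hA0 := hA_nonneg ω
    have key : 2 * sΔ * Real.sqrt (A ω * B) ≤ A ω + sΔ ^ 2 * B := by
      nlinarith [sq_nonneg (Real.sqrt (A ω) - sΔ * Real.sqrt B),
        Real.sq_sqrt hA0, Real.sq_sqrt hB_nonneg,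
        Real.sqrt_mul hA0 B, Real.sqrt_nonneg (A ω), Real.sqrt_nonneg B,
        mul_nonneg (Real.sqrt_nonneg (A ω)) (Real.sqrt_nonneg B)]
    have h2s : 0 < 2 * sΔ := by positivity
    have hdiv : Real.sqrt (A ω * B) ≤ (A ω + sΔ ^ 2 * B) / (2 * sΔ) := by
      rw [le_div_iff₀ h2s]
      linarith [key]
    refine hdiv.trans_eq ?_
    field_simp
  -- integrate
  have hRHS_int : Integrable (fun ω => 1 / (2 * sΔ) * A ω + sΔ / 2 * ∑ v, (Y ω v) ^ 2) μ :=
    (hA_int.const_mul _).add (hY2.const_mul _)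
  have hLHS_meas : AEStronglyMeasurable (fun ω => |∑ v, X ω v * Y ω v|) μ := by
    have : Measurable fun ω => |∑ v, X ω v * Y ω v| := by
      have hmYv : ∀ v, Measurable fun ω => Y ω v := fun v => (measurable_pi_apply v).comp hmY
      exact (Finset.measurable_sum _ fun v _ => (hmXv v).mul (hmYv v)).abs
    exact this.aestronglyMeasurable
  calc ∫ ω, |∑ v, X ω v * Y ω v| ∂μ
      ≤ ∫ ω, (1 / (2 * sΔ) * A ω + sΔ / 2 * ∑ v, (Y ω v) ^ 2) ∂μ :=
        integral_mono_of_nonneg (Filter.Eventually.of_forall fun ω => abs_nonneg _)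
          hRHS_int (Filter.Eventually.of_forall hpt)
    _ = 1 / (2 * sΔ) * ∫ ω, A ω ∂μ + sΔ / 2 * ∫ ω, ∑ v, (Y ω v) ^ 2 ∂μ := by
        rw [integral_add (hA_int.const_mul _) (hY2.const_mul _),
          integral_const_mul, integral_const_mul]
    _ ≤ 1 / (2 * sΔ) * (Δ * ∫ ω, ∑ v, (X ω v) ^ 2 ∂μ) + sΔ / 2 * ∫ ω, ∑ v, (Y ω v) ^ 2 ∂μ := by
        have : 0 ≤ 1 / (2 * sΔ) := by positivity
        nlinarith [mul_le_mul_of_nonneg_left hIA this]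
    _ = sΔ / 2 * ((∫ ω, ∑ v, (X ω v) ^ 2 ∂μ) + ∫ ω, ∑ v, (Y ω v) ^ 2 ∂μ) := by
        rw [← hsΔsq]
        field_simp
end

section
/- With the setup of Sparse SAGA (α_i ∈ ℝ^d with support in S_i, ᾱ := (1/n)∑_i α_i, D_i := P_{S_i}D where D = diag(1/p_v), p_v = |{i : v ∈ S_i}|/n > 0), and assuming additionally that each α_i - g_i has support in S_i for fixed vectors g_i with (1/n)∑_i g_i = 0, define ᾱ_i := α_i - D_i ᾱ. Then: E⟨α_i - g_i, D_i ᾱ⟩ = ᾱᵀ D ᾱ and E‖D_i ᾱ‖² = ᾱᵀ D ᾱ, where E is over i uniform on {1,...,n}. Consequently E‖ᾱ_i - g_i‖² = E‖α_i - g_i‖² - ᾱᵀ D ᾱ ≤ E‖α_i - g_i‖². -/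
theorem stmt11 (n d : ℕ) (hn : 0 < n) (S : Fin n → Finset (Fin d)) (p : Fin d → ℝ)
    (hp : ∀ v, p v = ((Finset.univ.filter fun i : Fin n => v ∈ S i).card : ℝ) / n)
    (hppos : ∀ v, 0 < p v)
    (α g : Fin n → Fin d → ℝ)
    (hαsupp : ∀ i v, v ∉ S i → α i v = 0)
    (hαgsupp : ∀ i v, v ∉ S i → α i v - g i v = 0)
    (hg : ∀ v, ∑ i, g i v = 0)
    (abar : Fin d → ℝ) (habar : ∀ v, abar v = (1 / (n : ℝ)) * ∑ i, α i v) :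
    (1 / (n : ℝ)) * ∑ i, ∑ v, (α i v - g i v) * (if v ∈ S i then abar v / p v else 0)
        = ∑ v, abar v * (abar v / p v) ∧
    (1 / (n : ℝ)) * ∑ i, ∑ v, (if v ∈ S i then abar v / p v else 0) ^ 2
        = ∑ v, abar v * (abar v / p v) ∧
    (1 / (n : ℝ)) * ∑ i, ∑ v, ((α i v - (if v ∈ S i then abar v / p v else 0)) - g i v) ^ 2
        = (1 / (n : ℝ)) * ∑ i, ∑ v, (α i v - g i v) ^ 2 - ∑ v, abar v * (abar v / p v) ∧
    (1 / (n : ℝ)) * ∑ i, ∑ v, ((α i v - (if v ∈ S i then abar v / p v else 0)) - g i v) ^ 2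
        ≤ (1 / (n : ℝ)) * ∑ i, ∑ v, (α i v - g i v) ^ 2 := by
  have hn0 : (n : ℝ) ≠ 0 := Nat.cast_ne_zero.mpr hn.ne'
  have hp0 : ∀ v, p v ≠ 0 := fun v => (hppos v).ne'
  -- First identity
  have h1 : (1 / (n : ℝ)) * ∑ i, ∑ v, (α i v - g i v) * (if v ∈ S i then abar v / p v else 0)
      = ∑ v, abar v * (abar v / p v) := by
    rw [Finset.sum_comm]
    have : ∀ v : Fin d, ∑ i, (α i v - g i v) * (if v ∈ S i then abar v / p v else 0)
        = (n : ℝ) * (abar v * (abar v / p v)) := by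
      intro v
      have step : ∀ i : Fin n, (α i v - g i v) * (if v ∈ S i then abar v / p v else 0)
          = (α i v - g i v) * (abar v / p v) := by
        intro i
        by_cases h : v ∈ S i
        · simp [h]
        · simp [h, hαgsupp i v h]
      rw [Finset.sum_congr rfl fun i _ => step i, ← Finset.sum_mul,
        Finset.sum_sub_distrib, hg v, sub_zero]
      have : ∑ i, α i v = (n : ℝ) * abar v := by
        rw [habar v]; field_simp
      rw [this]; ring
    rw [Finset.sum_congr rfl fun v _ => this v, ← Finset.mul_sum]
    field_simp
  -- Second identity
  have h2 : (1 / (n : ℝ)) * ∑ i, ∑ v, (if v ∈ S i then abar v / p v else 0) ^ 2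
      = ∑ v, abar v * (abar v / p v) := by
    rw [Finset.sum_comm]
    have : ∀ v : Fin d, ∑ i, (if v ∈ S i then abar v / p v else 0) ^ 2
        = (n : ℝ) * (abar v * (abar v / p v)) := by
      intro v
      have : ∑ i, (if v ∈ S i then abar v / p v else 0) ^ 2
          = ((Finset.univ.filter fun i : Fin n => v ∈ S i).card : ℝ) * (abar v / p v) ^ 2 := by
        simp only [apply_ite (fun x : ℝ => x ^ 2), zero_pow two_ne_zero]
        rw [← Finset.sum_filter, Finset.sum_const, nsmul_eq_mul]
      rw [this]
      have hc : ((Finset.univ.filter fun i : Fin n => v ∈ S i).card : ℝ) = (n : ℝ) * p v := by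
        rw [hp v]; field_simp
      rw [hc, div_pow]
      field_simp [hp0 v]
    rw [Finset.sum_congr rfl fun v _ => this v, ← Finset.mul_sum]
    field_simp
  -- Expansion
  have hexp : ∑ i, ∑ v, ((α i v - (if v ∈ S i then abar v / p v else 0)) - g i v) ^ 2
      = (∑ i, ∑ v, (α i v - g i v) ^ 2)
        - 2 * (∑ i, ∑ v, (α i v - g i v) * (if v ∈ S i then abar v / p v else 0))
        + ∑ i, ∑ v, (if v ∈ S i then abar v / p v else 0) ^ 2 := by
    have : ∀ i v, ((α i v - (if v ∈ S i then abar v / p v else 0)) - g i v) ^ 2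
        = (α i v - g i v) ^ 2
          - 2 * ((α i v - g i v) * (if v ∈ S i then abar v / p v else 0))
          + (if v ∈ S i then abar v / p v else 0) ^ 2 := by
      intro i v; ring
    simp only [this, Finset.sum_add_distrib, Finset.sum_sub_distrib, ← Finset.mul_sum]
  have h3 : (1 / (n : ℝ)) * ∑ i, ∑ v, ((α i v - (if v ∈ S i then abar v / p v else 0)) - g i v) ^ 2
      = (1 / (n : ℝ)) * ∑ i, ∑ v, (α i v - g i v) ^ 2 - ∑ v, abar v * (abar v / p v) := by
    rw [hexp, mul_add, mul_sub]
    rw [show (1 / (n : ℝ)) * (2 * (∑ i, ∑ v, (α i v - g i v) * (if v ∈ S i then abar v / p v else 0)))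
      = 2 * ((1 / (n : ℝ)) * ∑ i, ∑ v, (α i v - g i v) * (if v ∈ S i then abar v / p v else 0)) by ring]
    rw [h1, h2]; ring
  refine ⟨h1, h2, h3, ?_⟩
  rw [h3]
  have : 0 ≤ ∑ v, abar v * (abar v / p v) := by
    apply Finset.sum_nonneg
    intro v _
    rw [mul_div_assoc']
    exact div_nonneg (mul_self_nonneg _) (hppos v).le
  linarith
end
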